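/- The projective stabilizer of the vector u₋₁ = (0,1,0) in SO₀(2,1) is A ∪ k_π A: a matrix M ∈ SO₀(2,1) satisfies M·(0,1,0) = λ·(0,1,0) for some λ ≠ 0 if and only if either M = A(s) := [[cosh s, 0, sinh s],[0, 1, 0],[sinh s, 0, cosh s]] for some s ∈ ℝ, or M = k_π·A(s) = [[−cosh s, 0, −sinh s],[0, −1, 0],[sinh s, 0, cosh s]] for some s ∈ ℝ, where k_π = diag(−1,−1,1); and in either case λ = ±1. -/

import Mathlib

/-!
A matrix preserving `eta` preserves its polar form, so the columns of `M` are Lorentz-orthonormal.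
If the middle column is `l • e₁`, its norm gives `l ^ 2 = 1` and its orthogonality to the other two
columns kills the rest of the middle row. What remains is a `2 × 2` block `[[a, b], [c, d]]` with
`a² - c² = 1`, `ab = cd` and determinant `l`; then `a (ad - bc) = d (a² - c²)` and
`c (ad - bc) = b (a² - c²)` force `a = l d` and `b = l c`. Finally `d² - c² = 1` with `d > 0`
writes `(d, c) = (cosh s, sinh s)`.
-/

open Matrix

noncomputable def eta (u : Fin 3 → ℝ) : ℝ := (u 2) ^ 2 - (u 0) ^ 2 - (u 1) ^ 2

def inSO0 (M : Matrix (Fin 3) (Fin 3) ℝ) : Prop :=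
  (∀ u : Fin 3 → ℝ, eta (M *ᵥ u) = eta u) ∧ M.det = 1 ∧ 0 < M 2 2

noncomputable def Amat (s : ℝ) : Matrix (Fin 3) (Fin 3) ℝ :=
  !![Real.cosh s, 0, Real.sinh s;
     0, 1, 0;
     Real.sinh s, 0, Real.cosh s]

def lorentzInner (u v : Fin 3 → ℝ) : ℝ := u 2 * v 2 - u 0 * v 0 - u 1 * v 1

lemma eta_add (u v : Fin 3 → ℝ) : eta (u + v) = eta u + eta v + 2 * lorentzInner u v := by
  simp only [eta, lorentzInner, Pi.add_apply]
  ring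

lemma lorentzInner_mulVec {M : Matrix (Fin 3) (Fin 3) ℝ} (hM : ∀ u, eta (M *ᵥ u) = eta u)
    (u v : Fin 3 → ℝ) : lorentzInner (M *ᵥ u) (M *ᵥ v) = lorentzInner u v := by
  have h := hM (u + v)
  rw [mulVec_add, eta_add, eta_add, hM, hM] at h
  linarith

lemma lorentzInner_col {M : Matrix (Fin 3) (Fin 3) ℝ} (hM : ∀ u, eta (M *ᵥ u) = eta u)
    (i j : Fin 3) :
    lorentzInner (M.col i) (M.col j) = lorentzInner (Pi.single i 1) (Pi.single j 1) := by
  simpa only [mulVec_single_one] using lorentzInner_mulVec hM (Pi.single i 1) (Pi.single j 1)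

lemma eq_smul_of_det_of_orthogonal {a b c d ε : ℝ} (hε : ε ^ 2 = 1) (hac : a ^ 2 - c ^ 2 = 1)
    (horth : a * b = c * d) (hdet : a * d - b * c = ε) : a = ε * d ∧ b = ε * c :=
  ⟨by linear_combination -a * hε - ε * (a * hdet - d * hac + c * horth),
    by linear_combination c * hdet - b * hac + a * horth⟩

lemma exists_cosh_sinh_eq {c d : ℝ} (h : d ^ 2 - c ^ 2 = 1) (hd : 0 < d) :
    ∃ s, Real.cosh s = d ∧ Real.sinh s = c := by
  refine ⟨Real.arsinh c, ?_, Real.sinh_arsinh c⟩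
  rw [Real.cosh_arsinh, show 1 + c ^ 2 = d ^ 2 by linarith, Real.sqrt_sq hd.le]

section
variable {M : Matrix (Fin 3) (Fin 3) ℝ} {l : ℝ}

lemma sq_eq_one_of_mulVec_eq_smul (hM : ∀ u, eta (M *ᵥ u) = eta u)
    (h : M *ᵥ ![0, 1, 0] = l • ![0, 1, 0]) : l ^ 2 = 1 := by
  have := lorentzInner_mulVec hM ![0, 1, 0] ![0, 1, 0]
  simp only [lorentzInner, h, Pi.smul_apply, smul_eq_mul, cons_val_zero, cons_val_one,
    cons_val, mul_zero, mul_one, sub_self, zero_sub, neg_inj] at this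
  linear_combination this

lemma eq_boost_of_mulVec_eq_smul (hM : inSO0 M) (h : M *ᵥ ![0, 1, 0] = l • ![0, 1, 0]) :
    ∃ s, M = !![l * Real.cosh s, 0, l * Real.sinh s; 0, l, 0; Real.sinh s, 0, Real.cosh s] := by
  obtain ⟨hη, hdet, hpos⟩ := hM
  have hl := sq_eq_one_of_mulVec_eq_smul hη h
  have hl0 : l ≠ 0 := by rintro rfl; norm_num at hl
  have hM01 : M 0 1 = 0 := by simpa [mulVec, dotProduct, Fin.sum_univ_three] using congrFun h 0
  have hM11 : M 1 1 = l := by simpa [mulVec, dotProduct, Fin.sum_univ_three] using congrFun h 1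
  have hM21 : M 2 1 = 0 := by simpa [mulVec, dotProduct, Fin.sum_univ_three] using congrFun h 2
  have hM10 : M 1 0 = 0 := by
    simpa [lorentzInner, hM01, hM11, hM21, hl0] using lorentzInner_col hη 0 1
  have hM12 : M 1 2 = 0 := by
    simpa [lorentzInner, hM01, hM11, hM21, hl0] using lorentzInner_col hη 2 1
  have h00 : M 2 0 * M 2 0 - M 0 0 * M 0 0 = -1 := by
    simpa [lorentzInner, hM10] using lorentzInner_col hη 0 0
  have h22 : M 2 2 * M 2 2 - M 0 2 * M 0 2 = 1 := by
    simpa [lorentzInner, hM12] using lorentzInner_col hη 2 2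
  have h02 : M 2 0 * M 2 2 - M 0 0 * M 0 2 = 0 := by
    simpa [lorentzInner, hM10, hM12] using lorentzInner_col hη 0 2
  have hblock : M 0 0 * M 2 2 - M 0 2 * M 2 0 = l := by
    rw [det_fin_three, hM01, hM11, hM21, hM10, hM12] at hdet
    linear_combination l * hdet - (M 0 0 * M 2 2 - M 0 2 * M 2 0) * hl
  obtain ⟨hM00, hM02⟩ := eq_smul_of_det_of_orthogonal (a := M 0 0) (b := M 0 2) (c := M 2 0)
    (d := M 2 2) hl (by linear_combination -h00) (by linear_combination -h02) hblock
  obtain ⟨s, hcosh, hsinh⟩ := exists_cosh_sinh_eq (c := M 2 0)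
    (by linear_combination h22 + (M 0 2 + l * M 2 0) * hM02 + M 2 0 ^ 2 * hl) hpos
  refine ⟨s, ?_⟩
  ext i j
  fin_cases i <;> fin_cases j <;> simp [hM00, hM01, hM02, hM10, hM11, hM12, hM21, hcosh, hsinh]
end

/-- the projective stabilizer of u₋₁ = (0,1,0) in SO₀(2,1) is A ∪ k_π A,
and the eigenvalue λ is necessarily ±1. -/
theorem stmt10 (M : Matrix (Fin 3) (Fin 3) ℝ) (hM : inSO0 M) :
    ((∃ l : ℝ, l ≠ 0 ∧ M *ᵥ ![(0 : ℝ), 1, 0] = l • ![(0 : ℝ), 1, 0]) ↔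
      ((∃ s : ℝ, M = Amat s) ∨
        (∃ s : ℝ, M = !![-Real.cosh s, 0, -Real.sinh s;
                         0, -1, 0;
                         Real.sinh s, 0, Real.cosh s]))) ∧
    (∀ l : ℝ, l ≠ 0 → M *ᵥ ![(0 : ℝ), 1, 0] = l • ![(0 : ℝ), 1, 0] → l = 1 ∨ l = -1) := by
  have eigenvalue (l : ℝ) (h : M *ᵥ ![0, 1, 0] = l • ![0, 1, 0]) : l = 1 ∨ l = -1 :=
    sq_eq_one_iff.mp (sq_eq_one_of_mulVec_eq_smul hM.1 h)
  refine ⟨⟨fun ⟨l, _, h⟩ => ?_, ?_⟩, fun l _ h => eigenvalue l h⟩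
  · obtain ⟨s, hs⟩ := eq_boost_of_mulVec_eq_smul hM h
    rcases eigenvalue l h with rfl | rfl
    · exact Or.inl ⟨s, by simpa [Amat] using hs⟩
    · exact Or.inr ⟨s, by simpa using hs⟩
  · rintro (⟨s, rfl⟩ | ⟨s, rfl⟩)
    · exact ⟨1, one_ne_zero, by ext i; fin_cases i <;> simp [Amat]⟩
    · exact ⟨-1, by norm_num, by ext i; fin_cases i <;> simp⟩
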